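/- Let G and H be connected graphs, each with at least two vertices, of order n₁ and n₂, where G has t₁ true twin equivalence classes. If dim_l(G) = n₁ − t₁ and H is bipartite, then n₂(n₁ − t₁) ≤ dim_l(G ⊠ H) ≤ n₂(n₁ − t₁) + t₁. -/

import Mathlib

open SimpleGraph

/-- The strong product of two simple graphs. -/
def strongProd {α β : Type*} (G : SimpleGraph α) (H : SimpleGraph β) :
    SimpleGraph (α × β) where
  Adj x y := (x.1 = y.1 ∧ H.Adj x.2 y.2) ∨ (x.2 = y.2 ∧ G.Adj x.1 y.1) ∨
      (G.Adj x.1 y.1 ∧ H.Adj x.2 y.2)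
  symm := by
    constructor
    rintro x y (⟨h1, h2⟩ | ⟨h1, h2⟩ | ⟨h1, h2⟩)
    · exact Or.inl ⟨h1.symm, h2.symm⟩
    · exact Or.inr (Or.inl ⟨h1.symm, h2.symm⟩)
    · exact Or.inr (Or.inr ⟨h1.symm, h2.symm⟩)
  loopless := by
    constructor
    rintro x (⟨_, h⟩ | ⟨_, h⟩ | ⟨h, _⟩)
    · exact H.irrefl h
    · exact G.irrefl h
    · exact G.irrefl h

/-- A set `S` is a local metric generator for `G` if every pair of adjacent
vertices is distinguished by some element of `S`. -/
def IsLocalMetricGenerator {α : Type*} (G : SimpleGraph α) (S : Set α) : Prop :=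
  ∀ u v : α, G.Adj u v → ∃ s ∈ S, G.dist u s ≠ G.dist v s

/-- The local metric dimension of a graph. -/
noncomputable def localMetricDim {α : Type*} [Fintype α] (G : SimpleGraph α) : ℕ :=
  sInf {n | ∃ S : Finset α, S.card = n ∧ IsLocalMetricGenerator G ↑S}

/-- A set `S` is a metric generator for `G` if every pair of distinct
vertices is distinguished by some element of `S`. -/
def IsMetricGenerator {α : Type*} (G : SimpleGraph α) (S : Set α) : Prop :=
  ∀ u v : α, u ≠ v → ∃ s ∈ S, G.dist u s ≠ G.dist v s

/-- The metric dimension of a graph. -/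
noncomputable def metricDim {α : Type*} [Fintype α] (G : SimpleGraph α) : ℕ :=
  sInf {n | ∃ S : Finset α, S.card = n ∧ IsMetricGenerator G ↑S}

/-- The eccentricity of a vertex: the maximum distance to another vertex. -/
noncomputable def eccentricity {α : Type*} (G : SimpleGraph α) (v : α) : ℕ :=
  sSup {d | ∃ u, G.dist v u = d}

/-- The diameter of a graph: maximum eccentricity. -/
noncomputable def graphDiam {α : Type*} (G : SimpleGraph α) : ℕ :=
  sSup {d | ∃ v, eccentricity G v = d}

/-- The radius of a graph: minimum eccentricity. -/
noncomputable def graphRadius {α : Type*} (G : SimpleGraph α) : ℕ :=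
  sInf {d | ∃ v, eccentricity G v = d}

/-- The interval `I[x,y]`: vertices lying on some shortest `x`–`y` path. -/
def interval {α : Type*} (G : SimpleGraph α) (x y : α) : Set α :=
  {w | G.dist x w + G.dist w y = G.dist x y}

/-- A graph is adjacency `k`-resolved if for every pair of adjacent vertices
`x, y` there is a vertex `w` with `d(y,w) ≥ k` and `x ∈ I[y,w]`, or
`d(x,w) ≥ k` and `y ∈ I[x,w]`. -/
def AdjKResolved {α : Type*} (G : SimpleGraph α) (k : ℕ) : Prop :=
  ∀ x y : α, G.Adj x y →
    ∃ w : α, (k ≤ G.dist y w ∧ x ∈ interval G y w) ∨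
      (k ≤ G.dist x w ∧ y ∈ interval G x w)

/-- The true twin equivalence relation: `u ≈ v` iff `N[u] = N[v]`. -/
def trueTwinSetoid {α : Type*} (G : SimpleGraph α) : Setoid α where
  r u v := insert u (G.neighborSet u) = insert v (G.neighborSet v)
  iseqv := ⟨fun _ => rfl, Eq.symm, Eq.trans⟩

/-!
Distances in `G ⊠ H` are the maxima of the coordinate distances, and the closed neighbourhood
of `(a, b)` is `N[a] × N[b]`. Two distinct true twins are adjacent and equidistant from every
other vertex, so a local metric generator misses at most one vertex of each true twin class;
since the twin classes of `G ⊠ H` are unions of the sets `C × {b}` for `C` a twin class of `G`,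
this gives the lower bound. For the upper bound, take a minimum local metric generator `B` of
`G` and the set `B × V(H) ∪ V(G) × {b₀}`: a `G`-adjacent pair is separated through a vertex of
`B` in the row of the closer endpoint, and a pair `(a, b), (a, d)` with `b ~ d` is separated
by `(a, b₀)` because adjacent vertices of a bipartite graph have distances of different parity
to `b₀`.
-/

namespace SimpleGraph

variable {V W : Type*} {G : SimpleGraph V} {K : SimpleGraph W} {u v s : V}

theorem Walk.dist_apply_le_length {f : V → W}
    (hf : ∀ ⦃x y⦄, G.Adj x y → f x = f y ∨ K.Adj (f x) (f y)) (p : G.Walk u v) :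
    K.dist (f u) (f v) ≤ p.length := by
  induction p with
  | nil => simp
  | @cons x y z hxy p ih =>
    rw [length_cons]
    rcases hf hxy with hxy' | hxy'
    · rw [hxy']
      omega
    · calc K.dist (f x) (f z) ≤ K.dist (f x) (f y) + K.dist (f y) (f z) :=
            hxy'.reachable.dist_triangle_left _
        _ ≤ p.length + 1 := by rw [dist_eq_one_iff_adj.mpr hxy']; omega

theorem Reachable.dist_apply_le {f : V → W}
    (hf : ∀ ⦃x y⦄, G.Adj x y → f x = f y ∨ K.Adj (f x) (f y)) (h : G.Reachable u v) :
    K.dist (f u) (f v) ≤ G.dist u v := by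
  obtain ⟨p, hp⟩ := h.exists_walk_length_eq_dist
  exact hp ▸ p.dist_apply_le_length hf

theorem reachable_of_closedNbhd_eq (h : insert u (G.neighborSet u) = insert v (G.neighborSet v)) :
    G.Reachable u v := by
  have hu : u ∈ insert v (G.neighborSet v) := h ▸ Set.mem_insert u _
  rcases hu with rfl | hvu
  · rfl
  · exact hvu.symm.reachable

theorem adj_of_closedNbhd_eq (h : insert u (G.neighborSet u) = insert v (G.neighborSet v))
    (huv : u ≠ v) : G.Adj u v := by
  have hu : u ∈ insert v (G.neighborSet v) := h ▸ Set.mem_insert u _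
  exact (hu.resolve_left huv).symm

theorem dist_le_dist_of_closedNbhd_eq (h : insert u (G.neighborSet u) = insert v (G.neighborSet v))
    (hsu : s ≠ u) : G.dist v s ≤ G.dist u s := by
  by_cases hus : G.Reachable u s
  · obtain ⟨p, hp⟩ := hus.exists_walk_length_eq_dist
    cases p with
    | nil => exact absurd rfl hsu
    | @cons _ x _ hux q =>
      rw [← hp, Walk.length_cons]
      have hx : x ∈ insert v (G.neighborSet v) := h ▸ Set.mem_insert_of_mem u hux
      rcases hx with rfl | hvx
      · exact (dist_le q).trans (Nat.le_succ _)
      · exact dist_le (Walk.cons hvx q)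
  · have hvs : ¬G.Reachable v s := fun hvs => hus ((reachable_of_closedNbhd_eq h).trans hvs)
    simp [dist_eq_zero_of_not_reachable hvs]

theorem dist_eq_dist_of_closedNbhd_eq
    (h : insert u (G.neighborSet u) = insert v (G.neighborSet v)) (hsu : s ≠ u) (hsv : s ≠ v) :
    G.dist u s = G.dist v s :=
  le_antisymm (dist_le_dist_of_closedNbhd_eq h.symm hsv) (dist_le_dist_of_closedNbhd_eq h hsu)

theorem Adj.dist_ne_dist_of_colorable_two (hG : G.Colorable 2) (huv : G.Adj u v)
    (hus : G.Reachable u s) : G.dist u s ≠ G.dist v s := by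
  obtain ⟨p, hp⟩ := hus.exists_walk_length_eq_dist
  obtain ⟨q, hq⟩ := (huv.symm.reachable.trans hus).exists_walk_length_eq_dist
  intro h
  have heven := two_colorable_iff_forall_loop_even.mp hG u ((Walk.cons huv q).append p.reverse)
  rw [Walk.length_append, Walk.length_cons, Walk.length_reverse, hp, hq, ← h] at heven
  exact Nat.not_even_iff_odd.mpr ⟨G.dist u s, by ring⟩ heven

end SimpleGraph

section StrongProduct

variable {α β : Type*} {G : SimpleGraph α} {H : SimpleGraph β}

theorem strongProd_adj_fst ⦃p q : α × β⦄ (h : (strongProd G H).Adj p q) :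
    p.1 = q.1 ∨ G.Adj p.1 q.1 := by
  rcases h with ⟨h, -⟩ | ⟨-, h⟩ | ⟨h, -⟩ <;> tauto

theorem strongProd_adj_snd ⦃p q : α × β⦄ (h : (strongProd G H).Adj p q) :
    p.2 = q.2 ∨ H.Adj p.2 q.2 := by
  rcases h with ⟨-, h⟩ | ⟨h, -⟩ | ⟨-, h⟩ <;> tauto

theorem exists_strongProd_walk_length_eq_max {a x : α} (p : G.Walk a x) {b y : β}
    (q : H.Walk b y) :
    ∃ r : (strongProd G H).Walk (a, b) (x, y), r.length = max p.length q.length := by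
  induction p generalizing b with
  | @nil a =>
    let f : H →g strongProd G H := ⟨fun b => (a, b), fun h => Or.inl ⟨rfl, h⟩⟩
    exact ⟨q.map f, by simp⟩
  | @cons a c x hac p ih =>
    cases q with
    | nil =>
      let f : G →g strongProd G H := ⟨fun a => (a, y), fun h => Or.inr (Or.inl ⟨rfl, h⟩)⟩
      exact ⟨(Walk.cons hac p).map f, by simp⟩
    | cons hbd q =>
      obtain ⟨r, hr⟩ := ih q
      have hadj : (strongProd G H).Adj (a, b) (c, _) := Or.inr (Or.inr ⟨hac, hbd⟩)
      exact ⟨Walk.cons hadj r, by simp [hr]⟩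

theorem strongProd_dist {a x : α} {b y : β} (hax : G.Reachable a x) (hby : H.Reachable b y) :
    (strongProd G H).dist (a, b) (x, y) = max (G.dist a x) (H.dist b y) := by
  obtain ⟨p, hp⟩ := hax.exists_walk_length_eq_dist
  obtain ⟨q, hq⟩ := hby.exists_walk_length_eq_dist
  obtain ⟨r, hr⟩ := exists_strongProd_walk_length_eq_max p q
  apply le_antisymm
  · exact hp ▸ hq ▸ hr ▸ dist_le r
  · have hreach : (strongProd G H).Reachable (a, b) (x, y) := ⟨r⟩
    exact max_le (hreach.dist_apply_le (f := Prod.fst) strongProd_adj_fst)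
      (hreach.dist_apply_le (f := Prod.snd) strongProd_adj_snd)

theorem strongProd_dist_lt_of_dist_lt (hG : G.Connected) (hH : H.Connected) {a c x : α}
    (h : G.dist a x < G.dist c x) (b d : β) :
    (strongProd G H).dist (a, b) (x, b) < (strongProd G H).dist (c, d) (x, b) := by
  rw [strongProd_dist (hG a x) (hH b b), strongProd_dist (hG c x) (hH d b), dist_self,
    Nat.max_zero]
  exact h.trans_le (le_max_left _ _)

theorem insert_neighborSet_strongProd (p : α × β) :
    insert p ((strongProd G H).neighborSet p) =
      insert p.1 (G.neighborSet p.1) ×ˢ insert p.2 (H.neighborSet p.2) := by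
  ext q
  simp only [Set.mem_insert_iff, mem_neighborSet, Set.mem_prod, Prod.ext_iff]
  change _ ∨ (_ ∧ _) ∨ (_ ∧ _) ∨ (_ ∧ _) ↔ _
  grind

end StrongProduct

section LocalMetricDimension

variable {V : Type*} {G : SimpleGraph V}

theorem isLocalMetricGenerator_univ (G : SimpleGraph V) : IsLocalMetricGenerator G Set.univ :=
  fun u v huv => ⟨u, Set.mem_univ u, by
    rw [dist_self, dist_eq_one_iff_adj.mpr huv.symm]
    exact zero_ne_one⟩

variable [Fintype V]

theorem localMetricDim_le_card {S : Finset V} (hS : IsLocalMetricGenerator G S) :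
    localMetricDim G ≤ S.card :=
  Nat.sInf_le ⟨S, rfl, hS⟩

theorem exists_isLocalMetricGenerator_card_eq_localMetricDim (G : SimpleGraph V) :
    ∃ S : Finset V, S.card = localMetricDim G ∧ IsLocalMetricGenerator G S :=
  Nat.sInf_mem (s := {n | ∃ S : Finset V, S.card = n ∧ IsLocalMetricGenerator G S})
    ⟨_, Finset.univ, rfl, by simpa using isLocalMetricGenerator_univ G⟩

theorem le_localMetricDim {n : ℕ}
    (h : ∀ S : Finset V, IsLocalMetricGenerator G S → n ≤ S.card) :
    n ≤ localMetricDim G := by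
  obtain ⟨S, hS, hgen⟩ := exists_isLocalMetricGenerator_card_eq_localMetricDim G
  exact hS ▸ h S hgen

theorem card_sub_card_trueTwinClasses_le_localMetricDim (G : SimpleGraph V) :
    Fintype.card V - Nat.card (Quotient (trueTwinSetoid G)) ≤ localMetricDim G := by
  classical
  refine le_localMetricDim fun S hS => ?_
  have hinj : Function.Injective fun v : ↥(Sᶜ) => Quotient.mk (trueTwinSetoid G) v.1 := by
    rintro ⟨u, hu⟩ ⟨v, hv⟩ htwin
    by_contra hne
    replace htwin : insert u (G.neighborSet u) = insert v (G.neighborSet v) := Quotient.exact htwin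
    obtain ⟨s, hs, hdist⟩ := hS u v (adj_of_closedNbhd_eq htwin fun h => hne (Subtype.ext h))
    exact hdist (dist_eq_dist_of_closedNbhd_eq htwin
      (ne_of_mem_of_not_mem hs (Finset.mem_compl.mp hu))
      (ne_of_mem_of_not_mem hs (Finset.mem_compl.mp hv)))
  have hcard := Nat.card_le_card_of_injective _ hinj
  rw [Nat.card_eq_finsetCard, Finset.card_compl] at hcard
  omega

end LocalMetricDimension

section LocalMetricDimStrongProd

variable {α β : Type*} {G : SimpleGraph α} {H : SimpleGraph β}

theorem card_trueTwinClasses_strongProd_le [Finite α] [Finite β] :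
    Nat.card (Quotient (trueTwinSetoid (strongProd G H))) ≤
      Nat.card (Quotient (trueTwinSetoid G)) * Nat.card β := by
  let f : Quotient (trueTwinSetoid G) × β → Quotient (trueTwinSetoid (strongProd G H)) :=
    fun p => Quotient.lift (fun a => Quotient.mk _ (a, p.2))
      (fun a a' (h : insert a (G.neighborSet a) = insert a' (G.neighborSet a')) =>
        Quotient.sound (show insert (a, p.2) _ = insert (a', p.2) _ by
          rw [insert_neighborSet_strongProd, insert_neighborSet_strongProd]
          exact congrArg (· ×ˢ _) h)) p.1
  have hf : Function.Surjective f := by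
    rintro ⟨a, b⟩
    exact ⟨(Quotient.mk _ a, b), rfl⟩
  exact (Nat.card_le_card_of_surjective f hf).trans (Nat.card_prod _ _).le

theorem isLocalMetricGenerator_strongProd (hG : G.Connected) (hH : H.Connected)
    (hbip : H.Colorable 2) {B : Set α} (hB : IsLocalMetricGenerator G B) (b₀ : β) :
    IsLocalMetricGenerator (strongProd G H) {p | p.1 ∈ B ∨ p.2 = b₀} := by
  rintro ⟨a, b⟩ ⟨c, d⟩ hadj
  by_cases hac : G.Adj a c
  · obtain ⟨x, hx, hne⟩ := hB a c hac
    rcases hne.lt_or_gt with hlt | hlt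
    · exact ⟨(x, b), Or.inl hx, (strongProd_dist_lt_of_dist_lt hG hH hlt b d).ne⟩
    · exact ⟨(x, d), Or.inl hx, (strongProd_dist_lt_of_dist_lt hG hH hlt d b).ne'⟩
  · obtain ⟨rfl, hbd⟩ : a = c ∧ H.Adj b d := by
      rcases hadj with h | ⟨-, h⟩ | ⟨h, -⟩ <;> tauto
    refine ⟨(a, b₀), Or.inr rfl, ?_⟩
    rw [strongProd_dist (hG a a) (hH b b₀), strongProd_dist (hG a a) (hH d b₀), dist_self,
      Nat.zero_max, Nat.zero_max]
    exact hbd.dist_ne_dist_of_colorable_two hbip (hH b b₀)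

theorem localMetricDim_strongProd_le [Fintype α] [Fintype β] (hG : G.Connected)
    (hH : H.Connected) (hbip : H.Colorable 2) :
    localMetricDim (strongProd G H) ≤
      Fintype.card β * localMetricDim G + (Fintype.card α - localMetricDim G) := by
  classical
  obtain ⟨B, hBcard, hB⟩ := exists_isLocalMetricGenerator_card_eq_localMetricDim G
  obtain ⟨b₀⟩ := hH.nonempty
  let S : Finset (α × β) := B ×ˢ Finset.univ ∪ Bᶜ ×ˢ {b₀}
  have hS : (S : Set (α × β)) = {p | p.1 ∈ (B : Set α) ∨ p.2 = b₀} := by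
    ext ⟨a, b⟩
    by_cases ha : a ∈ B <;> simp [S, ha, eq_comm]
  have hcard : S.card = Fintype.card β * B.card + (Fintype.card α - B.card) := by
    rw [Finset.card_union_of_disjoint (Finset.disjoint_product.mpr (Or.inl disjoint_compl_right)),
      Finset.card_product, Finset.card_product, Finset.card_univ, Finset.card_compl,
      Finset.card_singleton, mul_one, mul_comm]
  calc localMetricDim (strongProd G H) ≤ S.card :=
        localMetricDim_le_card (hS ▸ isLocalMetricGenerator_strongProd hG hH hbip hB b₀)
    _ = _ := by rw [hcard, hBcard]

end LocalMetricDimStrongProd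

theorem stmt7_general {α β : Type*} [Fintype α] [Fintype β]
    (G : SimpleGraph α) (H : SimpleGraph β)
    (hG : G.Connected) (hH : H.Connected)
    (t1 : ℕ) (ht1 : Nat.card (Quotient (trueTwinSetoid G)) = t1)
    (hdimG : localMetricDim G = Fintype.card α - t1)
    (hbip : H.Colorable 2) :
    Fintype.card β * (Fintype.card α - t1) ≤ localMetricDim (strongProd G H) ∧
      localMetricDim (strongProd G H) ≤ Fintype.card β * (Fintype.card α - t1) + t1 := by
  have ht1_le : t1 ≤ Fintype.card α := by
    rw [← ht1, ← Nat.card_eq_fintype_card]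
    exact Nat.card_le_card_of_surjective _ Quotient.mk_surjective
  constructor
  · have hclasses : Nat.card (Quotient (trueTwinSetoid (strongProd G H))) ≤
        t1 * Fintype.card β := by
      simpa [ht1] using card_trueTwinClasses_strongProd_le (G := G) (H := H)
    calc Fintype.card β * (Fintype.card α - t1)
        = Fintype.card (α × β) - t1 * Fintype.card β := by
          rw [Fintype.card_prod, Nat.mul_sub, mul_comm, mul_comm t1]
      _ ≤ Fintype.card (α × β) - Nat.card (Quotient (trueTwinSetoid (strongProd G H))) :=
          Nat.sub_le_sub_left hclasses _
      _ ≤ localMetricDim (strongProd G H) :=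
          card_sub_card_trueTwinClasses_le_localMetricDim _
  · simpa [hdimG, Nat.sub_sub_self ht1_le] using localMetricDim_strongProd_le hG hH hbip

/-- if `dim_l(G) = n₁ − t₁` and `H` is bipartite, then
`n₂(n₁ − t₁) ≤ dim_l(G ⊠ H) ≤ n₂(n₁ − t₁) + t₁`. -/
theorem stmt7 {α β : Type*} [Fintype α] [Fintype β]
    (G : SimpleGraph α) (H : SimpleGraph β)
    (hG : G.Connected) (hH : H.Connected)
    (hn1 : 2 ≤ Fintype.card α) (hn2 : 2 ≤ Fintype.card β)
    (t1 : ℕ) (ht1 : Nat.card (Quotient (trueTwinSetoid G)) = t1)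
    (hdimG : localMetricDim G = Fintype.card α - t1)
    (hbip : H.Colorable 2) :
    Fintype.card β * (Fintype.card α - t1) ≤ localMetricDim (strongProd G H) ∧
      localMetricDim (strongProd G H) ≤ Fintype.card β * (Fintype.card α - t1) + t1 :=
  stmt7_general G H hG hH t1 ht1 hdimG hbip
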